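/- Let n ≥ 2 and let R, L, H > 0 satisfy R·L < H. Let φ : ℝ^{n−1} → ℝ be Lipschitz continuous with Lipschitz constant L and satisfy φ(x′) ≥ H for all |x′| ≤ R. Define the bounded open set Ω = {(x′, x_n) ∈ ℝ^{n−1} × ℝ : |x′| < R, −H < x_n < φ(x′)} (the domain below the graph of φ over the ball of radius R, truncated at height −H). Then there exists ρ > 0 such that Ω is starlike with respect to the open ball of radius ρ centered at the origin; indeed, any ρ with 0 < ρ < min( R, H, (H − R·L)/(1+L) ) works. -/

import Mathlib

/-!
Since the ball is convex, it suffices to show that the segment from `x ∈ Ω` to any `y` with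
`‖y‖ < ρ` stays in `Ω`. Write `z = a x + b y` on it. The constraints `|z'| < R` and `zₙ > -H` are
convex and hold at both ends. For the top constraint, the Lipschitz bound gives
`φ z' ≥ φ x' - b L (R + ρ)`, whereas `zₙ < a φ x' + b ρ`; as `φ x' ≥ H`, this closes exactly when
`ρ + L (R + ρ) < H`, i.e. `ρ < (H - R L) / (1 + L)`.
-/

open MeasureTheory Set

noncomputable section

/-- The projection onto the first `m` (Euclidean) coordinates of `ℝ^{m+1}`. -/
def firstCoords {m : ℕ} (x : EuclideanSpace ℝ (Fin (m + 1))) : EuclideanSpace ℝ (Fin m) :=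
  WithLp.toLp 2 (fun i => x (Fin.castSucc i))

def StarlikeWrt {E : Type*} [AddCommGroup E] [Module ℝ E] (Ω B : Set E) : Prop :=
  ∀ x ∈ Ω, convexHull ℝ ({x} ∪ B) ⊆ Ω

def subgraphDomain {m : ℕ} (R H : ℝ) (φ : EuclideanSpace ℝ (Fin m) → ℝ) :
    Set (EuclideanSpace ℝ (Fin (m + 1))) :=
  {x | ‖firstCoords x‖ < R ∧ -H < x (Fin.last m) ∧ x (Fin.last m) < φ (firstCoords x)}

theorem starlikeWrt_of_segment_subset {E : Type*} [AddCommGroup E] [Module ℝ E]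
    {Ω B : Set E} (hB : Convex ℝ B) (hB₀ : B.Nonempty)
    (h : ∀ x ∈ Ω, ∀ y ∈ B, segment ℝ x y ⊆ Ω) : StarlikeWrt Ω B := by
  intro x hx z hz
  rw [singleton_union, convexHull_insert hB₀, hB.convexHull_eq, mem_convexJoin] at hz
  obtain ⟨x, rfl, y, hy, hz⟩ := hz
  exact h x hx y hy hz

/-- Read on graphs: the segment from `(x, s)` to `(y, t)` stays strictly below the graph of `φ`. -/
theorem lt_apply_add_of_lipschitz {E : Type*} [SeminormedAddCommGroup E] [NormedSpace ℝ E]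
    {φ : E → ℝ} {L : ℝ} (hLip : ∀ a b : E, |φ a - φ b| ≤ L * ‖a - b‖) {x y : E} {s t a b : ℝ}
    (hs : s < φ x) (ht : t + L * ‖x - y‖ < φ x) (ha : 0 ≤ a) (hb : 0 ≤ b) (hab : a + b = 1) :
    a * s + b * t < φ (a • x + b • y) := by
  have hdiff : x - (a • x + b • y) = b • (x - y) := by
    rw [eq_sub_of_add_eq' hab]; module
  have hdrop : φ x - φ (a • x + b • y) ≤ b * (L * ‖x - y‖) := by
    calc φ x - φ (a • x + b • y) ≤ L * ‖x - (a • x + b • y)‖ := (le_abs_self _).trans (hLip _ _)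
      _ = b * (L * ‖x - y‖) := by
        rw [hdiff, norm_smul, Real.norm_of_nonneg hb]; ring
  have hcombo := convex_Iio (φ x) hs ht ha hb hab
  simp only [smul_eq_mul, mem_Iio] at hcombo
  linarith

theorem norm_firstCoords_le {m : ℕ} (x : EuclideanSpace ℝ (Fin (m + 1))) :
    ‖firstCoords x‖ ≤ ‖x‖ := by
  rw [EuclideanSpace.norm_eq, EuclideanSpace.norm_eq, Fin.sum_univ_castSucc]
  exact Real.sqrt_le_sqrt (le_add_of_nonneg_right (sq_nonneg _))

theorem firstCoords_smul_add_smul {m : ℕ} (a b : ℝ) (x y : EuclideanSpace ℝ (Fin (m + 1))) :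
    firstCoords (a • x + b • y) = a • firstCoords x + b • firstCoords y :=
  rfl

theorem segment_subset_subgraphDomain {m : ℕ} {R L H ρ : ℝ} (hL : 0 ≤ L)
    {φ : EuclideanSpace ℝ (Fin m) → ℝ}
    (hLip : ∀ a b : EuclideanSpace ℝ (Fin m), |φ a - φ b| ≤ L * ‖a - b‖)
    (hφH : ∀ x' : EuclideanSpace ℝ (Fin m), ‖x'‖ ≤ R → H ≤ φ x')
    (hρR : ρ < R) (hρH : ρ < H) (hρ : ρ + L * (R + ρ) < H)
    {x y : EuclideanSpace ℝ (Fin (m + 1))} (hx : x ∈ subgraphDomain R H φ) (hy : ‖y‖ < ρ) :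
    segment ℝ x y ⊆ subgraphDomain R H φ := by
  obtain ⟨hx', hxlow, hxup⟩ := hx
  have hy' : ‖firstCoords y‖ < ρ := (norm_firstCoords_le y).trans_lt hy
  have hyn : |y (Fin.last m)| < ρ := (PiLp.norm_apply_le y _).trans_lt hy
  rintro _ ⟨a, b, ha, hb, hab, rfl⟩
  refine ⟨?_, ?_, ?_⟩
  · rw [firstCoords_smul_add_smul, ← mem_ball_zero_iff]
    exact convex_ball 0 R (mem_ball_zero_iff.2 hx') (mem_ball_zero_iff.2 (hy'.trans hρR)) ha hb hab
  · have hylow : -H < y (Fin.last m) := by linarith [neg_abs_le (y (Fin.last m))]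
    simpa using convex_Ioi (-H) hxlow hylow ha hb hab
  · have hdist : L * ‖firstCoords x - firstCoords y‖ ≤ L * (R + ρ) :=
      mul_le_mul_of_nonneg_left ((norm_sub_le _ _).trans (by linarith)) hL
    have hyup : y (Fin.last m) + L * ‖firstCoords x - firstCoords y‖ < φ (firstCoords x) := by
      linarith [le_abs_self (y (Fin.last m)), hφH _ hx'.le]
    simpa [firstCoords_smul_add_smul] using lt_apply_add_of_lipschitz hLip hxup hyup ha hb hab

theorem starlikeWrt_subgraphDomain_ball {m : ℕ} {R L H ρ : ℝ} (hL : 0 ≤ L)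
    {φ : EuclideanSpace ℝ (Fin m) → ℝ}
    (hLip : ∀ a b : EuclideanSpace ℝ (Fin m), |φ a - φ b| ≤ L * ‖a - b‖)
    (hφH : ∀ x' : EuclideanSpace ℝ (Fin m), ‖x'‖ ≤ R → H ≤ φ x')
    (hρ : 0 < ρ) (hρlt : ρ < min R (min H ((H - R * L) / (1 + L)))) :
    StarlikeWrt (subgraphDomain R H φ) (Metric.ball 0 ρ) := by
  simp only [lt_min_iff, lt_div_iff₀ (by linarith : (0 : ℝ) < 1 + L)] at hρlt
  obtain ⟨hρR, hρH, hρRLH⟩ := hρlt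
  refine starlikeWrt_of_segment_subset (convex_ball 0 ρ) ⟨0, Metric.mem_ball_self hρ⟩ ?_
  intro x hx y hy
  exact segment_subset_subgraphDomain hL hLip hφH hρR hρH (by linarith) hx
    (mem_ball_zero_iff.1 hy)

theorem stmt12_general {m : ℕ} (R L H : ℝ) (hR : 0 < R) (hL : 0 < L) (hH : 0 < H)
    (hRLH : R * L < H) (φ : EuclideanSpace ℝ (Fin m) → ℝ)
    (hLip : ∀ a b : EuclideanSpace ℝ (Fin m), |φ a - φ b| ≤ L * ‖a - b‖)
    (hφH : ∀ x' : EuclideanSpace ℝ (Fin m), ‖x'‖ ≤ R → H ≤ φ x') :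
    (∃ ρ : ℝ, 0 < ρ ∧
      ∀ x ∈ {x : EuclideanSpace ℝ (Fin (m + 1)) |
          ‖firstCoords x‖ < R ∧ -H < x (Fin.last m) ∧ x (Fin.last m) < φ (firstCoords x)},
        convexHull ℝ ({x} ∪ Metric.ball (0 : EuclideanSpace ℝ (Fin (m + 1))) ρ) ⊆
          {x : EuclideanSpace ℝ (Fin (m + 1)) |
            ‖firstCoords x‖ < R ∧ -H < x (Fin.last m) ∧ x (Fin.last m) < φ (firstCoords x)}) ∧
    (∀ ρ : ℝ, 0 < ρ → ρ < min R (min H ((H - R * L) / (1 + L))) →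
      ∀ x ∈ {x : EuclideanSpace ℝ (Fin (m + 1)) |
          ‖firstCoords x‖ < R ∧ -H < x (Fin.last m) ∧ x (Fin.last m) < φ (firstCoords x)},
        convexHull ℝ ({x} ∪ Metric.ball (0 : EuclideanSpace ℝ (Fin (m + 1))) ρ) ⊆
          {x : EuclideanSpace ℝ (Fin (m + 1)) |
            ‖firstCoords x‖ < R ∧ -H < x (Fin.last m) ∧ x (Fin.last m) < φ (firstCoords x)}) := by
  have key := fun ρ ↦ starlikeWrt_subgraphDomain_ball (ρ := ρ) hL.le hLip hφH
  have hmin : 0 < min R (min H ((H - R * L) / (1 + L))) :=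
    lt_min hR (lt_min hH (div_pos (by linarith) (by linarith)))
  exact ⟨⟨_, half_pos hmin, key _ (half_pos hmin) (half_lt_self hmin)⟩, key⟩

theorem stmt12 {m : ℕ} (hm : 1 ≤ m) (R L H : ℝ) (hR : 0 < R) (hL : 0 < L) (hH : 0 < H)
    (hRLH : R * L < H) (φ : EuclideanSpace ℝ (Fin m) → ℝ)
    (hLip : ∀ a b : EuclideanSpace ℝ (Fin m), |φ a - φ b| ≤ L * ‖a - b‖)
    (hφH : ∀ x' : EuclideanSpace ℝ (Fin m), ‖x'‖ ≤ R → H ≤ φ x') :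
    (∃ ρ : ℝ, 0 < ρ ∧
      ∀ x ∈ {x : EuclideanSpace ℝ (Fin (m + 1)) |
          ‖firstCoords x‖ < R ∧ -H < x (Fin.last m) ∧ x (Fin.last m) < φ (firstCoords x)},
        convexHull ℝ ({x} ∪ Metric.ball (0 : EuclideanSpace ℝ (Fin (m + 1))) ρ) ⊆
          {x : EuclideanSpace ℝ (Fin (m + 1)) |
            ‖firstCoords x‖ < R ∧ -H < x (Fin.last m) ∧ x (Fin.last m) < φ (firstCoords x)}) ∧
    (∀ ρ : ℝ, 0 < ρ → ρ < min R (min H ((H - R * L) / (1 + L))) →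
      ∀ x ∈ {x : EuclideanSpace ℝ (Fin (m + 1)) |
          ‖firstCoords x‖ < R ∧ -H < x (Fin.last m) ∧ x (Fin.last m) < φ (firstCoords x)},
        convexHull ℝ ({x} ∪ Metric.ball (0 : EuclideanSpace ℝ (Fin (m + 1))) ρ) ⊆
          {x : EuclideanSpace ℝ (Fin (m + 1)) |
            ‖firstCoords x‖ < R ∧ -H < x (Fin.last m) ∧ x (Fin.last m) < φ (firstCoords x)}) :=
  stmt12_general R L H hR hL hH hRLH φ hLip hφH

end
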